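/- The shift map σ is chaotic on Σ₂; that is, there exists δ > 0 such that for every point x ∈ Σ₂ and every nonempty open set V ⊆ Σ₂ there is a point y ∈ V with limsup_{n→∞} d(σⁿ(x), σⁿ(y)) ≥ δ and liminf_{n→∞} d(σⁿ(x), σⁿ(y)) = 0. -/

import Mathlib

open Filter

/-- The shift map on the space `Σ₂` of binary sequences. -/
def shift (β : ℕ → Bool) : ℕ → Bool := fun i => β (i + 1)

/-- The metric `d(β,γ) = ∑ᵢ |βᵢ - γᵢ| / 2^(i+1)` on `Σ₂`. -/
noncomputable def d2 (β γ : ℕ → Bool) : ℝ :=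
  ∑' i : ℕ, |(if β i then (1 : ℝ) else 0) - (if γ i then (1 : ℝ) else 0)| / 2 ^ (i + 1)

/-- A set is open in `Σ₂` (with respect to the metric `d2`). -/
def IsOpen2 (V : Set (ℕ → Bool)) : Prop :=
  ∀ β ∈ V, ∃ ε : ℝ, 0 < ε ∧ ∀ γ : ℕ → Bool, d2 β γ < ε → γ ∈ V

/-! Given `z ∈ V` whose `2⁻ᴺ`-ball lies in `V`, take `y` equal to `z` on `[0, N)` and, beyond
`N`, equal to `x` except at the powers of two, where the bit of `x` is flipped. Disagreeing with `x`
infinitely often gives `d(σⁿx, σⁿy) ≥ 1/2` infinitely often, while the gaps between consecutive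
powers of two, of unbounded length, give `d(σⁿx, σⁿy) ≤ 2⁻ᵐ` infinitely often for every `m`. -/

noncomputable def bitDist (a b : Bool) : ℝ :=
  |(if a then (1 : ℝ) else 0) - (if b then (1 : ℝ) else 0)|

lemma bitDist_nonneg (a b : Bool) : 0 ≤ bitDist a b := abs_nonneg _

lemma bitDist_le_one (a b : Bool) : bitDist a b ≤ 1 := by
  cases a <;> cases b <;> norm_num [bitDist]

lemma bitDist_eq_one_of_ne {a b : Bool} (h : a ≠ b) : bitDist a b = 1 := by
  cases a <;> cases b <;> simp_all [bitDist]

lemma bitDist_self (a : Bool) : bitDist a a = 0 := by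
  simp [bitDist]

lemma d2_eq_tsum_bitDist (β γ : ℕ → Bool) :
    d2 β γ = ∑' i, bitDist (β i) (γ i) / 2 ^ (i + 1) := rfl

lemma bitDist_div_le (a b : Bool) (i : ℕ) : bitDist a b / 2 ^ (i + 1) ≤ 1 / 2 / 2 ^ i := by
  rw [div_div, ← pow_succ']
  gcongr
  exact bitDist_le_one a b

lemma summable_bitDist (β γ : ℕ → Bool) :
    Summable fun i => bitDist (β i) (γ i) / 2 ^ (i + 1) :=
  (summable_geometric_two' 1).of_nonneg_of_le
    (fun i => div_nonneg (bitDist_nonneg _ _) (by positivity)) (fun i => bitDist_div_le _ _ i)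

lemma d2_nonneg (β γ : ℕ → Bool) : 0 ≤ d2 β γ :=
  tsum_nonneg fun i => div_nonneg (bitDist_nonneg _ _) (by positivity)

lemma d2_le_of_forall_lt_eq {β γ : ℕ → Bool} {k : ℕ} (h : ∀ i < k, β i = γ i) :
    d2 β γ ≤ (1 / 2) ^ k := by
  rw [d2_eq_tsum_bitDist, ← (summable_bitDist β γ).sum_add_tsum_nat_add k,
    Finset.sum_eq_zero fun i hi => by rw [h i (Finset.mem_range.1 hi), bitDist_self, zero_div],
    zero_add]
  calc ∑' i, bitDist (β (i + k)) (γ (i + k)) / 2 ^ (i + k + 1)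
      ≤ ∑' i : ℕ, (1 / 2) ^ k / 2 / 2 ^ i :=
        ((summable_nat_add_iff k).2 (summable_bitDist β γ)).tsum_le_tsum
          (fun i => (bitDist_div_le _ _ (i + k)).trans_eq <| by
            rw [div_pow, one_pow, pow_add]; field_simp)
          (summable_geometric_two' _)
    _ = (1 / 2) ^ k := tsum_geometric_two' _

lemma d2_le_one (β γ : ℕ → Bool) : d2 β γ ≤ 1 := by
  simpa using d2_le_of_forall_lt_eq (β := β) (γ := γ) (k := 0) (by simp)

lemma half_le_d2_of_ne {β γ : ℕ → Bool} (h : β 0 ≠ γ 0) : 1 / 2 ≤ d2 β γ := by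
  have := (summable_bitDist β γ).le_tsum 0 fun j _ =>
    div_nonneg (bitDist_nonneg _ _) (by positivity)
  rwa [bitDist_eq_one_of_ne h, zero_add, pow_one] at this

lemma shift_iterate_apply (β : ℕ → Bool) (n i : ℕ) : shift^[n] β i = β (i + n) := by
  induction n generalizing β with
  | zero => rfl
  | succ n ih => rw [Function.iterate_succ_apply, ih]; rfl

lemma half_le_limsup_d2_shift_iterate {β γ : ℕ → Bool} (h : ∃ᶠ n in atTop, β n ≠ γ n) :
    1 / 2 ≤ limsup (fun n => d2 (shift^[n] β) (shift^[n] γ)) atTop :=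
  le_limsup_of_frequently_le
    (h.mono fun n hn => half_le_d2_of_ne (by simpa only [shift_iterate_apply, zero_add] using hn))
    (isBoundedUnder_of ⟨1, fun _ => d2_le_one _ _⟩)

lemma liminf_d2_shift_iterate_eq_zero {β γ : ℕ → Bool}
    (h : ∀ m, ∃ᶠ n in atTop, ∀ i < m, β (n + i) = γ (n + i)) :
    liminf (fun n => d2 (shift^[n] β) (shift^[n] γ)) atTop = 0 := by
  have hle (m : ℕ) : liminf (fun n => d2 (shift^[n] β) (shift^[n] γ)) atTop ≤ (1 / 2) ^ m :=
    liminf_le_of_frequently_le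
      ((h m).mono fun n hn => d2_le_of_forall_lt_eq fun i hi => by
        simpa only [shift_iterate_apply, add_comm i] using hn i hi)
      (isBoundedUnder_of ⟨0, fun _ => d2_nonneg _ _⟩)
  refine le_antisymm (ge_of_tendsto (tendsto_pow_atTop_nhds_zero_of_lt_one (by norm_num)
    (by norm_num)) (Eventually.of_forall hle)) ?_
  exact le_liminf_of_le (isBoundedUnder_of ⟨1, fun _ => d2_le_one _ _⟩).isCoboundedUnder_ge
    (Eventually.of_forall fun _ => d2_nonneg _ _)

lemma Nat.not_exists_two_pow_eq_of_lt_of_lt {k i : ℕ} (h₁ : 2 ^ k < i) (h₂ : i < 2 ^ (k + 1)) :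
    ¬∃ j, i = 2 ^ j := by
  rintro ⟨j, rfl⟩
  have hk : k < j := (Nat.pow_lt_pow_iff_right (by norm_num)).1 h₁
  have hj : j < k + 1 := (Nat.pow_lt_pow_iff_right (by norm_num)).1 h₂
  omega

open Classical in
noncomputable def spliceFlip (z x : ℕ → Bool) (N : ℕ) : ℕ → Bool := fun i =>
  if i < N then z i else if ∃ j, i = 2 ^ j then !x i else x i

section spliceFlip

variable (z x : ℕ → Bool) (N : ℕ)

lemma spliceFlip_of_lt {i : ℕ} (hi : i < N) : spliceFlip z x N i = z i := if_pos hi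

lemma frequently_ne_spliceFlip : ∃ᶠ n in atTop, x n ≠ spliceFlip z x N n := by
  refine frequently_atTop.2 fun a => ⟨2 ^ max a N, ?_, ?_⟩
  · exact (le_max_left a N).trans (Nat.lt_two_pow_self).le
  · have hN : ¬2 ^ max a N < N := not_lt.2 ((le_max_right a N).trans Nat.lt_two_pow_self.le)
    simp [spliceFlip, hN]

lemma frequently_eq_spliceFlip (m : ℕ) :
    ∃ᶠ n in atTop, ∀ i < m, x (n + i) = spliceFlip z x N (n + i) := by
  refine frequently_atTop.2 fun a => ?_
  set k := max m (max a N)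
  have hk : k < 2 ^ k := Nat.lt_two_pow_self
  have hpow : 2 ^ (k + 1) = 2 * 2 ^ k := by ring
  refine ⟨2 ^ k + 1, by omega, fun i hi => ?_⟩
  have hN : ¬2 ^ k + 1 + i < N := by omega
  have hnot := Nat.not_exists_two_pow_eq_of_lt_of_lt (k := k) (i := 2 ^ k + 1 + i) (by omega)
    (by omega)
  simp only [spliceFlip, hN, hnot, if_false]

end spliceFlip

theorem shift_chaotic :
    ∃ δ : ℝ, 0 < δ ∧
      ∀ x : ℕ → Bool, ∀ V : Set (ℕ → Bool), IsOpen2 V → V.Nonempty →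
        ∃ y ∈ V,
          δ ≤ limsup (fun n => d2 (shift^[n] x) (shift^[n] y)) atTop ∧
          liminf (fun n => d2 (shift^[n] x) (shift^[n] y)) atTop = 0 := by
  refine ⟨1 / 2, by norm_num, fun x V hV ⟨z, hz⟩ => ?_⟩
  obtain ⟨ε, hε, hball⟩ := hV z hz
  obtain ⟨N, hN⟩ := exists_pow_lt_of_lt_one hε (by norm_num : (1 / 2 : ℝ) < 1)
  have hclose : d2 z (spliceFlip z x N) < ε :=
    (d2_le_of_forall_lt_eq fun i hi => (spliceFlip_of_lt z x N hi).symm).trans_lt hN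
  exact ⟨spliceFlip z x N, hball _ hclose,
    half_le_limsup_d2_shift_iterate (frequently_ne_spliceFlip z x N),
    liminf_d2_shift_iterate_eq_zero (frequently_eq_spliceFlip z x N)⟩
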